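/- Stability of order 2 of the discrete state variable: Let U, Ū ∈ (ℝ^m)^{N+1}, and let Q̄ ∈ (ℝ^d)^{N+1} be the unique sequence with Q̄_0 = 0 and (ᶜΔ^α_− Q̄)_k = ∂f/∂x(Q^{U}_k, U_k, t_k) Q̄_k + ∂f/∂v(Q^{U}_k, U_k, t_k) Ū_k for k = 1,…,N. Then there exists a constant C ≥ 0 such that for every real ε with |ε| < 1 and every k = 0,…,N, ‖Q^{U+εŪ}_k − Q^{U}_k − ε Q̄_k‖ ≤ C ε². -/

import Mathlib

open Finset Filter
open scoped RealInnerProductSpace Topology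

noncomputable section

/-- `ℝ^n` with the euclidean norm. -/
abbrev Euc (n : ℕ) : Type := EuclideanSpace ℝ (Fin n)

/-- The Grünwald–Letnikov coefficients `α_r = (−α)(1−α)⋯(r−1−α)/r!`, with `α_0 = 1`. -/
def glCoef (α : ℝ) (r : ℕ) : ℝ :=
  (∏ i ∈ Finset.range r, ((i : ℝ) - α)) / (Nat.factorial r : ℝ)

/-- Left discrete fractional derivative `(Δ^α_− G)_k = h^{−α} ∑_{r=0}^{k} α_r G_{k−r}`. -/
def dMinus {n : ℕ} (α h : ℝ) (G : ℕ → Euc n) (k : ℕ) : Euc n :=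
  (h ^ (-α)) • ∑ r ∈ Finset.range (k + 1), glCoef α r • G (k - r)

/-- Right discrete fractional derivative `(Δ^α_+ G)_k = h^{−α} ∑_{r=0}^{N−k} α_r G_{k+r}`. -/
def dPlus {n : ℕ} (N : ℕ) (α h : ℝ) (G : ℕ → Euc n) (k : ℕ) : Euc n :=
  (h ^ (-α)) • ∑ r ∈ Finset.range (N - k + 1), glCoef α r • G (k + r)

/-- Left Caputo discrete fractional derivative `(ᶜΔ^α_− G)_k = h^{−α} ∑_{r=0}^{k} α_r (G_{k−r} − G_0)`. -/
def cdMinus {n : ℕ} (α h : ℝ) (G : ℕ → Euc n) (k : ℕ) : Euc n :=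
  dMinus α h (fun j => G j - G 0) k

/-- Right Caputo discrete fractional derivative
`(ᶜΔ^α_+ G)_k = h^{−α} ∑_{r=0}^{N−k} α_r (G_{k+r} − G_N)`. -/
def cdPlus {n : ℕ} (N : ℕ) (α h : ℝ) (G : ℕ → Euc n) (k : ℕ) : Euc n :=
  dPlus N α h (fun j => G j - G N) k

/-! The error `E = Q^{U+εŪ} - Q^U - ε Q̄` vanishes at `0`, so its Caputo derivative is a plain
Grünwald–Letnikov sum, and solving that sum for its leading term `E_k` bounds `‖E_k‖` by
`h^α ‖(ᶜΔ^α_− E)_k‖` plus a weighted sum of the earlier errors. By the state and linearised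
equations, `(ᶜΔ^α_− E)_k` is the second-order Taylor remainder of `f` at `(Q^U_k, U_k)` plus
`∂f/∂x · E_k`; the latter has norm at most `M ‖E_k‖` and is absorbed on the left since
`h^α M < 1`, and the remainder is `O(ε²)` once the first-order estimate `Q^{U+εŪ} - Q^U = O(ε)`
(proved by the same induction) is known. -/

section CaputoDerivative

variable {n : ℕ} {α h : ℝ}

lemma glCoef_zero (α : ℝ) : glCoef α 0 = 1 := by
  simp [glCoef]

lemma cdMinus_sub (G₁ G₂ : ℕ → Euc n) (k : ℕ) :
    cdMinus α h (G₁ - G₂) k = cdMinus α h G₁ k - cdMinus α h G₂ k := by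
  simp only [cdMinus, dMinus, Pi.sub_apply, ← smul_sub, ← Finset.sum_sub_distrib]
  congr 1
  refine Finset.sum_congr rfl fun r _ => ?_
  congr 1
  abel

lemma cdMinus_smul (c : ℝ) (G : ℕ → Euc n) (k : ℕ) :
    cdMinus α h (c • G) k = c • cdMinus α h G k := by
  simp only [cdMinus, dMinus, Pi.smul_apply, ← smul_sub, Finset.smul_sum, smul_comm c]

lemma norm_le_of_norm_cdMinus_le (hh : 0 < h) {E : ℕ → Euc n} (hE : E 0 = 0) {k : ℕ} {w : ℝ}
    (hw : ‖cdMinus α h E k‖ ≤ w) :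
    ‖E k‖ ≤ h ^ α * w + ∑ r ∈ range k, |glCoef α (r + 1)| * ‖E (k - (r + 1))‖ := by
  have hsum : h ^ α • cdMinus α h E k
      = E k + ∑ r ∈ range k, glCoef α (r + 1) • E (k - (r + 1)) := by
    simp only [cdMinus, dMinus, hE, sub_zero, smul_smul, ← Real.rpow_add hh, add_neg_cancel,
      Real.rpow_zero, one_smul, Finset.sum_range_succ', glCoef_zero, Nat.sub_zero]
    exact add_comm _ _
  calc ‖E k‖
      = ‖h ^ α • cdMinus α h E k - ∑ r ∈ range k, glCoef α (r + 1) • E (k - (r + 1))‖ := by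
        rw [hsum, add_sub_cancel_right]
    _ ≤ ‖h ^ α • cdMinus α h E k‖ + ∑ r ∈ range k, ‖glCoef α (r + 1) • E (k - (r + 1))‖ :=
        (norm_sub_le _ _).trans (add_le_add_right (norm_sum_le _ _) _)
    _ ≤ h ^ α * w + ∑ r ∈ range k, |glCoef α (r + 1)| * ‖E (k - (r + 1))‖ := by
        rw [norm_smul, Real.norm_of_nonneg (Real.rpow_nonneg hh.le α)]
        simp only [norm_smul, Real.norm_eq_abs]
        gcongr

end CaputoDerivative

section Calculus

variable {E F G : Type*} [NormedAddCommGroup E] [NormedSpace ℝ E] [NormedAddCommGroup F]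
  [NormedSpace ℝ F] [NormedAddCommGroup G] [NormedSpace ℝ G]

lemma DifferentiableAt.fderiv_prod_apply {g : E × F → G} {x : E} {v : F}
    (hg : DifferentiableAt ℝ g (x, v)) (u : E) (w : F) :
    fderiv ℝ g (x, v) (u, w)
      = fderiv ℝ (fun y => g (y, v)) x u + fderiv ℝ (fun z => g (x, z)) v w := by
  have hx : HasFDerivAt (fun y => g (y, v))
      ((fderiv ℝ g (x, v)).comp (ContinuousLinearMap.inl ℝ E F)) x :=
    hg.hasFDerivAt.comp x (hasFDerivAt_prodMk_left x v)
  have hv : HasFDerivAt (fun z => g (x, z))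
      ((fderiv ℝ g (x, v)).comp (ContinuousLinearMap.inr ℝ E F)) v :=
    hg.hasFDerivAt.comp v (hasFDerivAt_prodMk_right x v)
  rw [hx.fderiv, hv.fderiv, ContinuousLinearMap.comp_apply, ContinuousLinearMap.comp_apply,
    ← map_add, ContinuousLinearMap.inl_apply, ContinuousLinearMap.inr_apply, Prod.mk_add_mk,
    add_zero, zero_add]

lemma ContDiff.exists_norm_sub_sub_fderiv_le [ProperSpace E] {g : E → F} (hg : ContDiff ℝ 2 g)
    (p : E) (ρ : ℝ) :
    ∃ K ≥ 0, ∀ x ∈ Metric.closedBall p ρ, ‖g x - g p - fderiv ℝ g p (x - p)‖ ≤ K * ‖x - p‖ ^ 2 := by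
  obtain ⟨K, hK⟩ := (hg.fderiv_right one_add_one_eq_two.le).contDiffOn.exists_lipschitzOnWith
    one_ne_zero (convex_closedBall p ρ) (isCompact_closedBall p ρ)
  refine ⟨K, K.coe_nonneg, fun x hx => ?_⟩
  have hball : Metric.closedBall p ‖x - p‖ ⊆ Metric.closedBall p ρ :=
    Metric.closedBall_subset_closedBall (by rwa [← dist_eq_norm])
  have hp : p ∈ Metric.closedBall p ‖x - p‖ := Metric.mem_closedBall_self (norm_nonneg _)
  have hx' : x ∈ Metric.closedBall p ‖x - p‖ := by rw [Metric.mem_closedBall, dist_eq_norm]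
  have hderiv : ∀ y ∈ Metric.closedBall p ‖x - p‖,
      ‖fderiv ℝ g y - fderiv ℝ g p‖ ≤ K * ‖x - p‖ := fun y hy =>
    (hK.norm_sub_le (hball hy) (hball hp)).trans
      (by gcongr; rwa [← dist_eq_norm, ← Metric.mem_closedBall])
  calc ‖g x - g p - fderiv ℝ g p (x - p)‖ ≤ K * ‖x - p‖ * ‖x - p‖ :=
        (convex_closedBall p ‖x - p‖).norm_image_sub_le_of_norm_fderiv_le'
          (fun y _ => (hg.differentiable two_ne_zero).differentiableAt) hderiv hp hx'
    _ = K * ‖x - p‖ ^ 2 := by ring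

end Calculus

lemma exists_uniform_bound_of_volterra_ineq {ι : Type*} {S : Set ι} {e : ι → ℕ → ℝ}
    {g : ι → ℝ} {β : ℕ → ℝ} {L : ℝ} {N : ℕ} (hL : L < 1) (hβ : ∀ r, 0 ≤ β r)
    (hg : ∀ i ∈ S, 0 ≤ g i) (he0 : ∀ i ∈ S, e i 0 = 0)
    (he : ∀ k, 1 ≤ k → k ≤ N → ∃ c, ∀ i ∈ S,
      e i k ≤ L * e i k + c * g i + ∑ r ∈ range k, β r * e i (k - (r + 1))) :
    ∃ C ≥ 0, ∀ i ∈ S, ∀ k ≤ N, e i k ≤ C * g i := by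
  have pointwise : ∀ k ≤ N, ∃ C ≥ 0, ∀ i ∈ S, e i k ≤ C * g i := by
    intro k
    induction k using Nat.strong_induction_on with
    | _ k ih =>
      intro hkN
      rcases Nat.eq_zero_or_pos k with rfl | hk
      · exact ⟨0, le_rfl, fun i hi => by simp [he0 i hi]⟩
      obtain ⟨c, hc⟩ := he k hk hkN
      choose! C hC0 hC using fun j (hj : j < k) => ih j hj (hj.le.trans hkN)
      have hlt : ∀ r ∈ range k, k - (r + 1) < k := fun r _ => Nat.sub_lt hk r.succ_pos
      refine ⟨(max c 0 + ∑ r ∈ range k, β r * C (k - (r + 1))) / (1 - L),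
        div_nonneg (add_nonneg (le_max_right c 0) (Finset.sum_nonneg fun r hr =>
          mul_nonneg (hβ r) (hC0 _ (hlt r hr)))) (sub_nonneg.2 hL.le), fun i hi => ?_⟩
      have hsum : ∑ r ∈ range k, β r * e i (k - (r + 1))
          ≤ (∑ r ∈ range k, β r * C (k - (r + 1))) * g i := by
        rw [Finset.sum_mul]
        refine Finset.sum_le_sum fun r hr => ?_
        rw [mul_assoc]
        exact mul_le_mul_of_nonneg_left (hC _ (hlt r hr) i hi) (hβ r)
      have hcg : c * g i ≤ max c 0 * g i := mul_le_mul_of_nonneg_right (le_max_left c 0) (hg i hi)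
      rw [div_mul_eq_mul_div, le_div_iff₀ (sub_pos.2 hL)]
      linarith [hc i hi]
  choose! C hC0 hC using pointwise
  refine ⟨∑ k ∈ range (N + 1), C k, Finset.sum_nonneg fun k hk =>
    hC0 k (Nat.lt_succ_iff.1 (Finset.mem_range.1 hk)), fun i hi k hk => ?_⟩
  refine (hC k hk i hi).trans (mul_le_mul_of_nonneg_right ?_ (hg i hi))
  exact Finset.single_le_sum (fun j hj => hC0 j (Nat.lt_succ_iff.1 (Finset.mem_range.1 hj)))
    (Finset.mem_range.2 (Nat.lt_succ_of_le hk))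

section StateEquation

variable {d : ℕ} {F : Type*} [NormedAddCommGroup F] [NormedSpace ℝ F]

def SolvesCaputoEq (α h : ℝ) (N : ℕ) (φ : ℕ → Euc d × F → Euc d) (U : ℕ → F)
    (Q : ℕ → Euc d) : Prop :=
  ∀ k, 1 ≤ k → k ≤ N → cdMinus α h Q k = φ k (Q k, U k)

variable {α h M : ℝ} {N : ℕ} {φ : ℕ → Euc d × F → Euc d} {U Ubar : ℕ → F} {Q Qbar : ℕ → Euc d}

lemma cdMinus_sub_sub_smul_eq_taylor_remainder_add {ε : ℝ} {Qε : ℕ → Euc d} {k : ℕ}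
    (hk : 1 ≤ k) (hkN : k ≤ N) (hφ : DifferentiableAt ℝ (φ k) (Q k, U k))
    (hQ : SolvesCaputoEq α h N φ U Q)
    (hQε : SolvesCaputoEq α h N φ (fun j => U j + ε • Ubar j) Qε)
    (hQbar : cdMinus α h Qbar k = fderiv ℝ (fun x => φ k (x, U k)) (Q k) (Qbar k)
        + fderiv ℝ (fun v => φ k (Q k, v)) (U k) (Ubar k)) :
    cdMinus α h (Qε - Q - ε • Qbar) k
      = (φ k (Qε k, U k + ε • Ubar k) - φ k (Q k, U k)
          - fderiv ℝ (φ k) (Q k, U k) (Qε k - Q k, ε • Ubar k))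
        + fderiv ℝ (fun y => φ k (y, U k)) (Q k) (Qε k - Q k - ε • Qbar k) := by
  rw [cdMinus_sub, cdMinus_sub, cdMinus_smul, hQε k hk hkN, hQ k hk hkN, hQbar,
    hφ.fderiv_prod_apply]
  simp only [map_sub, map_smul, smul_add]
  abel

variable [ProperSpace F] {Qε : ℝ → ℕ → Euc d}

lemma exists_norm_sub_le_mul_abs (hh : 0 < h) (hL : h ^ α * M < 1)
    (hφ : ∀ k, ContDiff ℝ 1 (φ k))
    (hLip : ∀ k ≤ N, ∀ x₁ x₂ v, ‖φ k (x₁, v) - φ k (x₂, v)‖ ≤ M * ‖x₁ - x₂‖)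
    (hQ : SolvesCaputoEq α h N φ U Q)
    (hQε : ∀ ε, SolvesCaputoEq α h N φ (fun j => U j + ε • Ubar j) (Qε ε))
    (hQε0 : ∀ ε, Qε ε 0 = Q 0) :
    ∃ C ≥ 0, ∀ ε, |ε| < 1 → ∀ k ≤ N, ‖Qε ε k - Q k‖ ≤ C * |ε| := by
  refine exists_uniform_bound_of_volterra_ineq (S := {ε | |ε| < 1})
    (e := fun ε k => ‖Qε ε k - Q k‖) (β := fun r => |glCoef α (r + 1)|) hL
    (fun r => abs_nonneg _) (fun ε _ => abs_nonneg ε) (fun ε _ => by simp [hQε0])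
    fun k hk hkN => ?_
  obtain ⟨K, hK⟩ := ((hφ k).comp (contDiff_const.prodMk contDiff_id)).contDiffOn
    |>.exists_lipschitzOnWith one_ne_zero (convex_closedBall (U k) ‖Ubar k‖)
      (isCompact_closedBall _ _)
  refine ⟨h ^ α * (K * ‖Ubar k‖), fun ε hε => ?_⟩
  have hεU : ‖U k + ε • Ubar k - U k‖ ≤ ‖Ubar k‖ * |ε| := by
    rw [add_sub_cancel_left, norm_smul, Real.norm_eq_abs, mul_comm]
  have hcontrol : ‖φ k (Q k, U k + ε • Ubar k) - φ k (Q k, U k)‖ ≤ K * (‖Ubar k‖ * |ε|) := by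
    refine hK.norm_sub_le_of_le ?_ (Metric.mem_closedBall_self (norm_nonneg _)) hεU
    rw [Metric.mem_closedBall, dist_eq_norm]
    exact hεU.trans (mul_le_of_le_one_right (norm_nonneg _) (show |ε| < 1 from hε).le)
  have hcd : ‖cdMinus α h (Qε ε - Q) k‖ ≤ M * ‖Qε ε k - Q k‖ + K * (‖Ubar k‖ * |ε|) := by
    rw [cdMinus_sub, hQε ε k hk hkN, hQ k hk hkN]
    exact (norm_sub_le_norm_sub_add_norm_sub _ (φ k (Q k, U k + ε • Ubar k)) _).trans
      (add_le_add (hLip k hkN _ _ _) hcontrol)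
  have hE := norm_le_of_norm_cdMinus_le hh (by simp [hQε0]) hcd
  simp only [Pi.sub_apply] at hE ⊢
  linarith

lemma exists_norm_sub_sub_smul_le_mul_sq (hh : 0 < h) (hM : 0 ≤ M) (hL : h ^ α * M < 1)
    (hφ : ∀ k, ContDiff ℝ 2 (φ k))
    (hLip : ∀ k ≤ N, ∀ x₁ x₂ v, ‖φ k (x₁, v) - φ k (x₂, v)‖ ≤ M * ‖x₁ - x₂‖)
    (hQ : SolvesCaputoEq α h N φ U Q)
    (hQε : ∀ ε, SolvesCaputoEq α h N φ (fun j => U j + ε • Ubar j) (Qε ε))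
    (hQε0 : ∀ ε, Qε ε 0 = Q 0) (hQbar0 : Qbar 0 = 0)
    (hQbar : ∀ k, 1 ≤ k → k ≤ N → cdMinus α h Qbar k
      = fderiv ℝ (fun x => φ k (x, U k)) (Q k) (Qbar k)
        + fderiv ℝ (fun v => φ k (Q k, v)) (U k) (Ubar k)) :
    ∃ C ≥ 0, ∀ ε, |ε| < 1 → ∀ k ≤ N, ‖Qε ε k - Q k - ε • Qbar k‖ ≤ C * ε ^ 2 := by
  obtain ⟨C₁, hC₁0, hC₁⟩ := exists_norm_sub_le_mul_abs hh hL (fun k => (hφ k).of_le one_le_two)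
    hLip hQ hQε hQε0
  refine exists_uniform_bound_of_volterra_ineq (S := {ε | |ε| < 1})
    (e := fun ε k => ‖Qε ε k - Q k - ε • Qbar k‖) (β := fun r => |glCoef α (r + 1)|) hL
    (fun r => abs_nonneg _) (fun ε _ => sq_nonneg ε) (fun ε _ => by simp [hQε0, hQbar0])
    fun k hk hkN => ?_
  set ρ := C₁ + ‖Ubar k‖
  obtain ⟨K, hK0, hK⟩ := (hφ k).exists_norm_sub_sub_fderiv_le (Q k, U k) ρ
  refine ⟨h ^ α * (K * ρ ^ 2), fun ε hε => ?_⟩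
  replace hε : |ε| < 1 := hε
  have hxp : ((Qε ε k, U k + ε • Ubar k) : Euc d × F) - (Q k, U k)
      = (Qε ε k - Q k, ε • Ubar k) := by
    rw [Prod.mk_sub_mk, add_sub_cancel_left]
  have hxρ : ‖((Qε ε k - Q k, ε • Ubar k) : Euc d × F)‖ ≤ ρ * |ε| := by
    rw [Prod.norm_def, norm_smul, Real.norm_eq_abs]
    refine max_le ((hC₁ ε hε k hkN).trans ?_) ?_ <;> nlinarith [abs_nonneg ε, norm_nonneg (Ubar k)]
  have hremainder := hK (Qε ε k, U k + ε • Ubar k) (by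
    rw [Metric.mem_closedBall, dist_eq_norm, hxp]
    exact hxρ.trans (mul_le_of_le_one_right (by positivity) hε.le))
  rw [hxp] at hremainder
  have hpartial : ‖fderiv ℝ (fun y => φ k (y, U k)) (Q k)‖ ≤ M :=
    norm_fderiv_le_of_lip' ℝ hM (Eventually.of_forall fun y => hLip k hkN y (Q k) (U k))
  have hcd : ‖cdMinus α h (Qε ε - Q - ε • Qbar) k‖
      ≤ K * ρ ^ 2 * ε ^ 2 + M * ‖Qε ε k - Q k - ε • Qbar k‖ := by
    rw [cdMinus_sub_sub_smul_eq_taylor_remainder_add hk hkN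
      ((hφ k).differentiable two_ne_zero _) hQ (hQε ε) (hQbar k hk hkN)]
    refine (norm_add_le _ _).trans (add_le_add (hremainder.trans ?_)
      ((ContinuousLinearMap.le_opNorm _ _).trans (by gcongr)))
    rw [mul_assoc, ← sq_abs ε, ← mul_pow]
    gcongr
  have hE := norm_le_of_norm_cdMinus_le hh (by simp [hQε0, hQbar0]) hcd
  simp only [Pi.sub_apply, Pi.smul_apply] at hE ⊢
  linarith

end StateEquation

theorem stability_order_two_general
    (d m N : ℕ) (hN : 1 ≤ N)
    (a b : ℝ) (hab : a < b) (α : ℝ)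
    (A : Euc d)
    (f : Euc d → Euc m → ℝ → Euc d)
    (hf : ContDiff ℝ 2 fun p : Euc d × Euc m × ℝ => f p.1 p.2.1 p.2.2)
    (M : ℝ) (hM : 0 ≤ M)
    (hLip : ∀ (x₁ x₂ : Euc d) (v : Euc m), ∀ t ∈ Set.Icc a b,
      ‖f x₁ v t - f x₂ v t‖ ≤ M * ‖x₁ - x₂‖)
    (hMsmall : 2 * ((b - a) / (N : ℝ)) ^ α * M < 1)
    -- `SQ V` is the discrete state variable associated to the discrete control `V`
    (SQ : (ℕ → Euc m) → ℕ → Euc d)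
    (hSQ : ∀ V : ℕ → Euc m, SQ V 0 = A ∧ ∀ k, 1 ≤ k → k ≤ N →
      cdMinus α ((b - a) / (N : ℝ)) (SQ V) k
        = f (SQ V k) (V k) (a + (k : ℝ) * ((b - a) / (N : ℝ))))
    (U Ubar : ℕ → Euc m)
    -- `Qbar` is the solution of the linearised discrete fractional Cauchy problem
    (Qbar : ℕ → Euc d) (hQbar0 : Qbar 0 = 0)
    (hQbar : ∀ k, 1 ≤ k → k ≤ N →
      cdMinus α ((b - a) / (N : ℝ)) Qbar k
        = (fderiv ℝ (fun x => f x (U k) (a + (k : ℝ) * ((b - a) / (N : ℝ)))) (SQ U k)) (Qbar k)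
          + (fderiv ℝ (fun v => f (SQ U k) v (a + (k : ℝ) * ((b - a) / (N : ℝ)))) (U k)) (Ubar k)) :
    ∃ C ≥ (0 : ℝ), ∀ ε : ℝ, |ε| < 1 → ∀ k ≤ N,
      ‖SQ (fun j => U j + ε • Ubar j) k - SQ U k - ε • Qbar k‖ ≤ C * ε ^ 2 := by
  set h := (b - a) / (N : ℝ) with h_def
  have hh : 0 < h := div_pos (sub_pos.2 hab) (by exact_mod_cast hN)
  have hL : h ^ α * M < 1 := by nlinarith [mul_nonneg (Real.rpow_nonneg hh.le α) hM]
  have ht : ∀ k ≤ N, a + (k : ℝ) * h ∈ Set.Icc a b := fun k hk => by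
    have hkh : (k : ℝ) * h ≤ N * h := by gcongr
    have hNh : (N : ℝ) * h = b - a := by rw [h_def]; field_simp
    constructor <;> nlinarith [mul_nonneg (Nat.cast_nonneg (α := ℝ) k) hh.le]
  exact exists_norm_sub_sub_smul_le_mul_sq hh hM hL
    (fun k => hf.comp (contDiff_fst.prodMk (contDiff_snd.prodMk contDiff_const)))
    (fun k hk x₁ x₂ v => hLip x₁ x₂ v _ (ht k hk)) (hSQ U).2 (fun ε => (hSQ _).2)
    (fun ε => (hSQ _).1.trans (hSQ U).1.symm) hQbar0 hQbar

/-- **Stability of order 2 of the discrete state variable.** -/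
theorem stability_order_two
    (d m N : ℕ) (hd : 1 ≤ d) (hm : 1 ≤ m) (hN : 1 ≤ N)
    (a b : ℝ) (hab : a < b) (α : ℝ) (hα : 0 < α) (hα1 : α ≤ 1)
    (A : Euc d)
    (f : Euc d → Euc m → ℝ → Euc d)
    (hf : ContDiff ℝ 2 fun p : Euc d × Euc m × ℝ => f p.1 p.2.1 p.2.2)
    (M : ℝ) (hM : 0 ≤ M)
    (hLip : ∀ (x₁ x₂ : Euc d) (v : Euc m), ∀ t ∈ Set.Icc a b,
      ‖f x₁ v t - f x₂ v t‖ ≤ M * ‖x₁ - x₂‖)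
    (hMsmall : 2 * ((b - a) / (N : ℝ)) ^ α * M < 1)
    -- `SQ V` is the discrete state variable associated to the discrete control `V`
    (SQ : (ℕ → Euc m) → ℕ → Euc d)
    (hSQ : ∀ V : ℕ → Euc m, SQ V 0 = A ∧ ∀ k, 1 ≤ k → k ≤ N →
      cdMinus α ((b - a) / (N : ℝ)) (SQ V) k
        = f (SQ V k) (V k) (a + (k : ℝ) * ((b - a) / (N : ℝ))))
    (U Ubar : ℕ → Euc m)
    -- `Qbar` is the solution of the linearised discrete fractional Cauchy problem
    (Qbar : ℕ → Euc d) (hQbar0 : Qbar 0 = 0)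
    (hQbar : ∀ k, 1 ≤ k → k ≤ N →
      cdMinus α ((b - a) / (N : ℝ)) Qbar k
        = (fderiv ℝ (fun x => f x (U k) (a + (k : ℝ) * ((b - a) / (N : ℝ)))) (SQ U k)) (Qbar k)
          + (fderiv ℝ (fun v => f (SQ U k) v (a + (k : ℝ) * ((b - a) / (N : ℝ)))) (U k)) (Ubar k)) :
    ∃ C ≥ (0 : ℝ), ∀ ε : ℝ, |ε| < 1 → ∀ k ≤ N,
      ‖SQ (fun j => U j + ε • Ubar j) k - SQ U k - ε • Qbar k‖ ≤ C * ε ^ 2 :=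
  stability_order_two_general d m N hN a b hab α A f hf M hM hLip hMsmall SQ hSQ U Ubar Qbar hQbar0
    hQbar
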